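/- arXiv:1411.4112 — 2 statements merged into one kernel-verified Lean document; each statement's English description precedes it below -/
import Mathlib

section
/- Let a > 1 and let q be an odd positive integer. The sequence of functions Z_n : ℝ^d → ℂ defined by Z_n(x) = Σ_{k=0}^{n} C_k(n,a) · exp((p·x)·(−i)^q·(1 − 2k/n)^q/ħ) converges pointwise on ℝ^d to Z(x) = exp((p·x)·(−i·a)^q/ħ) as n → ∞, and the convergence is uniform on every compact subset of ℝ^d. -/
open scoped RealInnerProductSpace
open Finset Filter Topology

/-!
Expanding the exponentials, `Z_n(x) = ∑_m z^m M_n(qm) / m!` with `z = (p·x)(-i)^q/ħ` and the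
moments `M_n(j) = ∑_k C_k(n,a) (1 - 2k/n)^j`, while the limit is `∑_m z^m a^(qm) / m!`.
Reading `n - 2k` as a sum of `n` signs and expanding its `j`-th power over maps
`f : Fin j → Fin n`, the weights `C_k(n,a)` factor over the points of `Fin n`, and
`n^j M_n(j) = ∑_f a^#{i | #f⁻¹(i) odd}`. Each summand lies in `[1, a^j]` and equals `a^j` when `f`
is injective, so `|M_n(j) - a^j| ≤ (1 - n(n-1)⋯(n-j+1)/n^j) a^j`: this tends to `0` and is at
most `a^j`, and dominated convergence for the exponential series gives convergence, uniformly
for `z` in compact sets.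
-/

section SignExpansion

variable {R : Type*} [CommRing R]

theorem prod_neg_one_pow_card_fiber {ι κ : Type*} [Fintype ι] [Fintype κ] [DecidableEq κ]
    (f : ι → κ) (t : Finset κ) :
    ∏ i ∈ t, (-1 : R) ^ #{l | f l = i} = ∏ l, if f l ∈ t then -1 else 1 := by
  rw [← prod_fiberwise' univ f (fun i => if i ∈ t then (-1 : R) else 1)]
  simp only [prod_const, ite_pow, one_pow]
  rw [prod_ite_mem, univ_inter]

theorem sum_ite_mem_neg_one_one {κ : Type*} [Fintype κ] [DecidableEq κ] (t : Finset κ) :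
    ∑ i, (if i ∈ t then (-1 : R) else 1) = Fintype.card κ - 2 * #t := by
  rw [sum_ite, sum_const, sum_const, filter_mem_eq_inter, univ_inter, filter_not,
    filter_mem_eq_inter, univ_inter, card_univ_sdiff, nsmul_eq_mul, nsmul_eq_mul,
    Nat.cast_sub (card_le_univ t)]
  ring

theorem sum_choose_mul_pow_mul_sub_two_mul_pow (α β : R) (n j : ℕ) :
    ∑ k ∈ range (n + 1), (n.choose k : R) * α ^ (n - k) * β ^ k * ((n : R) - 2 * k) ^ j
      = ∑ f : Fin j → Fin n, ∏ i, (α + β * (-1) ^ #{l | f l = i}) := by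
  calc _ = ∑ t : Finset (Fin n), β ^ #t * α ^ (n - #t) * ((n : R) - 2 * #t) ^ j := by
        have hcard := sum_powerset_apply_card
          (fun k => β ^ k * α ^ (n - k) * ((n : R) - 2 * k) ^ j) (x := (univ : Finset (Fin n)))
        simp only [powerset_univ, card_univ, Fintype.card_fin, nsmul_eq_mul] at hcard
        rw [hcard]
        exact sum_congr rfl fun k _ => by ring
    _ = ∑ t : Finset (Fin n), β ^ #t * α ^ (n - #t) *
          ∑ f : Fin j → Fin n, ∏ l, if f l ∈ t then (-1 : R) else 1 := by
        refine sum_congr rfl fun t _ => ?_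
        have h : (n : R) - 2 * #t = ∑ i, if i ∈ t then (-1 : R) else 1 := by
          rw [sum_ite_mem_neg_one_one, Fintype.card_fin]
        rw [h, Fintype.sum_pow]
    _ = _ := by
        simp_rw [mul_sum]
        rw [sum_comm]
        refine sum_congr rfl fun f _ => ?_
        simp_rw [add_comm α, prod_add, ← powerset_univ]
        refine sum_congr rfl fun t _ => ?_
        rw [prod_mul_distrib, prod_const, prod_const, prod_neg_one_pow_card_fiber, card_univ_sdiff,
          Fintype.card_fin]
        ring

end SignExpansion

section OddFibers

variable {ι κ : Type*} [Fintype ι] [Fintype κ] [DecidableEq κ]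

def oddFibers (f : ι → κ) : Finset κ := {i | Odd #{l | f l = i}}

theorem oddFibers_subset_image (f : ι → κ) : oddFibers f ⊆ univ.image f := by
  intro i hi
  obtain ⟨l, hl⟩ := card_pos.mp (mem_filter.mp hi).2.pos
  exact mem_image.mpr ⟨l, mem_univ l, (mem_filter.mp hl).2⟩

theorem oddFibers_eq_image_of_injective {f : ι → κ} (hf : Function.Injective f) :
    oddFibers f = univ.image f := by
  refine (oddFibers_subset_image f).antisymm fun i hi => ?_
  obtain ⟨l, -, rfl⟩ := mem_image.mp hi
  have : ({l' | f l' = f l} : Finset ι) = {l} := by ext; simp [hf.eq_iff]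
  simp [oddFibers, this]

theorem card_oddFibers_le (f : ι → κ) : #(oddFibers f) ≤ Fintype.card ι :=
  (card_le_card (oddFibers_subset_image f)).trans card_image_le

theorem card_oddFibers_of_injective {f : ι → κ} (hf : Function.Injective f) :
    #(oddFibers f) = Fintype.card ι := by
  rw [oddFibers_eq_image_of_injective hf, card_image_of_injective _ hf, card_univ]

end OddFibers

theorem half_add_half_mul_neg_one_pow (a : ℝ) (m : ℕ) :
    (1 + a) / 2 + (1 - a) / 2 * (-1) ^ m = if Even m then 1 else a := by
  rcases Nat.even_or_odd m with h | h
  · rw [h.neg_one_pow, if_pos h]; ring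
  · rw [h.neg_one_pow, if_neg (Nat.not_even_iff_odd.2 h)]; ring

theorem prod_half_add_half_mul_neg_one_pow {ι κ : Type*} [Fintype ι] [Fintype κ] [DecidableEq κ]
    (a : ℝ) (f : ι → κ) :
    ∏ i, ((1 + a) / 2 + (1 - a) / 2 * (-1) ^ #{l | f l = i}) = a ^ #(oddFibers f) := by
  simp only [half_add_half_mul_neg_one_pow, prod_ite, prod_const_one, one_mul, prod_const,
    oddFibers, Nat.not_even_iff_odd]

noncomputable def superoscCoeff (a : ℝ) (n k : ℕ) : ℝ :=
  n.choose k * ((1 + a) / 2) ^ (n - k) * ((1 - a) / 2) ^ k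

noncomputable def superoscMoment (a : ℝ) (n j : ℕ) : ℝ :=
  ∑ k ∈ range (n + 1), superoscCoeff a n k * (1 - 2 * k / n) ^ j

theorem ofReal_superoscMoment (a : ℝ) (n j : ℕ) :
    (superoscMoment a n j : ℂ)
      = ∑ k ∈ range (n + 1), (superoscCoeff a n k : ℂ) * (1 - 2 * k / n) ^ j := by
  simp [superoscMoment]

theorem superoscMoment_eq {n : ℕ} (hn : n ≠ 0) (a : ℝ) (j : ℕ) :
    superoscMoment a n j = (∑ f : Fin j → Fin n, a ^ #(oddFibers f)) / n ^ j := by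
  have key := sum_choose_mul_pow_mul_sub_two_mul_pow ((1 + a) / 2) ((1 - a) / 2) n j
  simp only [prod_half_add_half_mul_neg_one_pow] at key
  rw [← key, sum_div, superoscMoment]
  refine sum_congr rfl fun k _ => ?_
  rw [superoscCoeff, show (1 : ℝ) - 2 * k / n = (n - 2 * k) / n by field_simp,
    div_pow (n - 2 * k : ℝ)]
  ring

theorem card_filter_not_injective (j n : ℕ) :
    (#{f : Fin j → Fin n | ¬ Function.Injective f} : ℝ) = n ^ j - n.descFactorial j := by
  have hinj : #{f : Fin j → Fin n | Function.Injective f} = n.descFactorial j := by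
    rw [← Fintype.card_subtype, Fintype.card_congr (Equiv.subtypeInjectiveEquivEmbedding _ _),
      Fintype.card_embedding_eq, Fintype.card_fin, Fintype.card_fin]
  have htot := card_filter_add_card_filter_not (s := univ)
    (fun f : Fin j → Fin n => Function.Injective f)
  rw [hinj, card_univ, Fintype.card_fun, Fintype.card_fin, Fintype.card_fin] at htot
  rw [eq_sub_iff_add_eq, add_comm]
  exact_mod_cast htot

theorem abs_superoscMoment_sub_pow_le {a : ℝ} (ha : 1 ≤ a) {n : ℕ} (hn : n ≠ 0) (j : ℕ) :
    |superoscMoment a n j - a ^ j| ≤ (1 - n.descFactorial j / (n : ℝ) ^ j) * a ^ j := by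
  have hnj : (0 : ℝ) < (n : ℝ) ^ j := by positivity
  have hdefect : a ^ j - superoscMoment a n j
      = (∑ f : Fin j → Fin n, (a ^ j - a ^ #(oddFibers f))) / n ^ j := by
    rw [superoscMoment_eq hn, sum_sub_distrib, sum_const, card_univ, Fintype.card_fun,
      Fintype.card_fin, Fintype.card_fin, nsmul_eq_mul]
    field_simp
    push_cast
    ring
  have hterm : ∀ f : Fin j → Fin n,
      0 ≤ a ^ j - a ^ #(oddFibers f) ∧
        a ^ j - a ^ #(oddFibers f) ≤ if Function.Injective f then 0 else a ^ j := by
    intro f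
    have hle : a ^ #(oddFibers f) ≤ a ^ j := by
      simpa using pow_le_pow_right₀ ha (card_oddFibers_le f)
    refine ⟨sub_nonneg.mpr hle, ?_⟩
    split_ifs with hf
    · rw [card_oddFibers_of_injective hf, Fintype.card_fin, sub_self]
    · linarith [one_le_pow₀ (n := #(oddFibers f)) ha]
  have hsum : ∑ f : Fin j → Fin n, (a ^ j - a ^ #(oddFibers f))
      ≤ ((n : ℝ) ^ j - n.descFactorial j) * a ^ j := by
    calc _ ≤ ∑ f : Fin j → Fin n, if Function.Injective f then 0 else a ^ j :=
          sum_le_sum fun f _ => (hterm f).2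
      _ = _ := by rw [sum_ite, sum_const_zero, zero_add, sum_const, nsmul_eq_mul,
          card_filter_not_injective]
  have hnonneg : 0 ≤ a ^ j - superoscMoment a n j := by
    rw [hdefect]; exact div_nonneg (sum_nonneg fun f _ => (hterm f).1) hnj.le
  rw [abs_sub_comm, abs_of_nonneg hnonneg, hdefect, div_le_iff₀ hnj]
  calc _ ≤ _ := hsum
    _ = _ := by field_simp

theorem abs_superoscMoment_sub_pow_le_pow {a : ℝ} (ha : 1 ≤ a) {n : ℕ} (hn : n ≠ 0) (j : ℕ) :
    |superoscMoment a n j - a ^ j| ≤ a ^ j := by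
  refine (abs_superoscMoment_sub_pow_le ha hn j).trans ?_
  have : (0 : ℝ) ≤ n.descFactorial j / (n : ℝ) ^ j := by positivity
  nlinarith [one_le_pow₀ (n := j) ha]

theorem tendsto_superoscMoment {a : ℝ} (ha : 1 ≤ a) (j : ℕ) :
    Tendsto (fun n => superoscMoment a n j) atTop (𝓝 (a ^ j)) := by
  have hratio : Tendsto (fun n : ℕ => (n.descFactorial j : ℝ) / (n : ℝ) ^ j) atTop (𝓝 1) :=
    (Asymptotics.isEquivalent_iff_tendsto_one
      (eventually_ne_atTop 0 |>.mono fun n hn => by positivity)).mp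
      (isEquivalent_descFactorial j)
  have hbound : Tendsto (fun n : ℕ => (1 - n.descFactorial j / (n : ℝ) ^ j) * a ^ j)
      atTop (𝓝 0) := by
    simpa using ((tendsto_const_nhds (x := (1 : ℝ))).sub hratio).mul_const (a ^ j)
  refine tendsto_iff_norm_sub_tendsto_zero.mpr
    (squeeze_zero' (Eventually.of_forall fun n => norm_nonneg _) ?_ hbound)
  filter_upwards [eventually_ne_atTop 0] with n hn
  exact abs_superoscMoment_sub_pow_le ha hn j

theorem hasSum_sum_mul_exp_mul_pow {ι : Type*} (S : Finset ι) (w s : ι → ℂ) (q : ℕ) (z : ℂ) :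
    HasSum (fun m => z ^ m * (∑ k ∈ S, w k * s k ^ (q * m)) / m.factorial)
      (∑ k ∈ S, w k * Complex.exp (z * s k ^ q)) := by
  have := hasSum_sum fun k (_ : k ∈ S) =>
    (NormedSpace.expSeries_div_hasSum_exp (z * s k ^ q)).mul_left (w k)
  rw [← Complex.exp_eq_exp_ℂ] at this
  refine this.congr_fun fun m => ?_
  rw [mul_sum, sum_div]
  refine sum_congr rfl fun k _ => ?_
  rw [mul_pow, pow_mul]
  ring

theorem summable_pow_div_factorial_mul_pow_mul (R a : ℝ) (q : ℕ) :
    Summable fun m : ℕ => R ^ m / m.factorial * a ^ (q * m) :=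
  (Real.summable_pow_div_factorial (R * a ^ q)).congr fun m => by rw [mul_pow, ← pow_mul]; ring

theorem norm_sum_superoscCoeff_mul_exp_sub_exp_le {a : ℝ} (ha : 1 ≤ a) (q : ℕ) {n : ℕ}
    (hn : n ≠ 0) {z : ℂ} {R : ℝ} (hz : ‖z‖ ≤ R) :
    ‖∑ k ∈ range (n + 1), (superoscCoeff a n k : ℂ) * Complex.exp (z * (1 - 2 * k / n) ^ q)
        - Complex.exp (z * a ^ q)‖
      ≤ ∑' m, R ^ m / m.factorial * |superoscMoment a n (q * m) - a ^ (q * m)| := by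
  have hR : 0 ≤ R := (norm_nonneg z).trans hz
  have hexp : HasSum (fun m => z ^ m * ((a ^ (q * m) : ℝ) : ℂ) / m.factorial)
      (Complex.exp (z * a ^ q)) := by
    rw [Complex.exp_eq_exp_ℂ]
    refine (NormedSpace.expSeries_div_hasSum_exp (z * a ^ q)).congr_fun fun m => ?_
    push_cast
    rw [mul_pow, pow_mul]
  have hdiff := (hasSum_sum_mul_exp_mul_pow (range (n + 1)) (fun k => (superoscCoeff a n k : ℂ))
    (fun k => 1 - 2 * k / n) q z).sub hexp
  have hbound : Summable fun m : ℕ =>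
      R ^ m / m.factorial * |superoscMoment a n (q * m) - a ^ (q * m)| :=
    (summable_pow_div_factorial_mul_pow_mul R a q).of_nonneg_of_le (fun m => by positivity)
      fun m => mul_le_mul_of_nonneg_left (abs_superoscMoment_sub_pow_le_pow ha hn _)
        (by positivity)
  refine hdiff.norm_le_of_bounded hbound.hasSum fun m => ?_
  rw [← ofReal_superoscMoment, ← sub_div, ← mul_sub, ← Complex.ofReal_sub, norm_div, norm_mul,
    norm_pow, Complex.norm_real, Complex.norm_natCast, Real.norm_eq_abs, div_mul_eq_mul_div]
  gcongr

theorem tendsto_tsum_superoscMoment_error {a : ℝ} (ha : 1 ≤ a) (q : ℕ) {R : ℝ} (hR : 0 ≤ R) :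
    Tendsto (fun n => ∑' m, R ^ m / m.factorial * |superoscMoment a n (q * m) - a ^ (q * m)|)
      atTop (𝓝 0) := by
  have hlim := tendsto_tsum_of_dominated_convergence
    (summable_pow_div_factorial_mul_pow_mul R a q)
    (fun m => ((tendsto_superoscMoment ha (q * m)).sub_const (a ^ (q * m))).abs.const_mul
      (R ^ m / m.factorial))
    (eventually_ne_atTop 0 |>.mono fun n hn m => by
      rw [Real.norm_of_nonneg (by positivity)]
      exact mul_le_mul_of_nonneg_left (abs_superoscMoment_sub_pow_le_pow ha hn _) (by positivity))
  simpa using hlim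

theorem tendstoLocallyUniformly_sum_superoscCoeff_mul_exp {a : ℝ} (ha : 1 ≤ a) (q : ℕ) :
    TendstoLocallyUniformly
      (fun n (z : ℂ) =>
        ∑ k ∈ range (n + 1), (superoscCoeff a n k : ℂ) * Complex.exp (z * (1 - 2 * k / n) ^ q))
      (fun z => Complex.exp (z * a ^ q)) atTop := by
  rw [tendstoLocallyUniformly_iff_forall_isCompact]
  intro K hK
  obtain ⟨R, hR, hKR⟩ := hK.isBounded.exists_pos_norm_le
  rw [Metric.tendstoUniformlyOn_iff]
  intro ε hε
  filter_upwards [(tendsto_tsum_superoscMoment_error ha q hR.le).eventually (gt_mem_nhds hε),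
    eventually_ne_atTop 0] with n hn hn0 z hz
  rw [dist_comm, dist_eq_norm]
  exact (norm_sum_superoscCoeff_mul_exp_sub_exp_le ha q hn0 (hKR z hz)).trans_lt hn

theorem superoscillation_convergence_odd_power_general
    (hbar : ℝ) (d : ℕ)
    (p : EuclideanSpace ℝ (Fin d)) (a : ℝ) (ha : 1 < a)
    (q : ℕ)
    (Z : ℕ → EuclideanSpace ℝ (Fin d) → ℂ)
    (hZ : ∀ (n : ℕ) (x : EuclideanSpace ℝ (Fin d)),
      Z n x = ∑ k ∈ Finset.range (n + 1),
        ((n.choose k : ℂ) * (((1 + a) / 2 : ℝ) : ℂ) ^ (n - k)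
            * (((1 - a) / 2 : ℝ) : ℂ) ^ k)
          * Complex.exp (((⟪p, x⟫ : ℝ) : ℂ) * (-Complex.I) ^ q
              * (1 - 2 * (k : ℂ) / (n : ℂ)) ^ q / (hbar : ℂ))) :
    (∀ x : EuclideanSpace ℝ (Fin d),
      Filter.Tendsto (fun n : ℕ => Z n x) Filter.atTop
        (nhds (Complex.exp (((⟪p, x⟫ : ℝ) : ℂ)
          * (-Complex.I * (a : ℂ)) ^ q / (hbar : ℂ)))))
    ∧ ∀ K : Set (EuclideanSpace ℝ (Fin d)), IsCompact K →
        TendstoUniformlyOn (fun n x => Z n x)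
          (fun x => Complex.exp (((⟪p, x⟫ : ℝ) : ℂ)
            * (-Complex.I * (a : ℂ)) ^ q / (hbar : ℂ)))
          Filter.atTop K := by
  have hloc := (tendstoLocallyUniformly_sum_superoscCoeff_mul_exp ha.le q).comp
    (fun x => ((⟪p, x⟫ : ℝ) : ℂ) * (-Complex.I) ^ q / hbar) (by fun_prop)
  have hZ' : Z = fun n x => ∑ k ∈ range (n + 1), (superoscCoeff a n k : ℂ) *
      Complex.exp (((⟪p, x⟫ : ℝ) : ℂ) * (-Complex.I) ^ q / hbar * (1 - 2 * k / n) ^ q) := by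
    ext n x
    rw [hZ]
    refine sum_congr rfl fun k _ => ?_
    rw [superoscCoeff]
    push_cast
    congr 2
    ring
  have hlim : ∀ x : EuclideanSpace ℝ (Fin d),
      Complex.exp (((⟪p, x⟫ : ℝ) : ℂ) * (-Complex.I * a) ^ q / hbar)
        = Complex.exp (((⟪p, x⟫ : ℝ) : ℂ) * (-Complex.I) ^ q / hbar * a ^ q) := fun x => by
    congr 1
    ring
  rw [tendstoLocallyUniformly_iff_forall_isCompact] at hloc
  simp only [hZ', hlim]
  exact ⟨fun x => (hloc {x} isCompact_singleton).tendsto_at rfl, hloc⟩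

/-- Fix `ħ > 0`, `d ≥ 1`, `p ∈ ℝ^d`, `a > 1` and an odd positive integer `q`.
The sequence `Z_n(x) = ∑_{k=0}^{n} C_k(n,a) · exp((p·x)·(−i)^q·(1 − 2k/n)^q/ħ)`
converges pointwise on `ℝ^d` to `Z(x) = exp((p·x)·(−i·a)^q/ħ)` as `n → ∞`,
uniformly on every compact subset of `ℝ^d`. -/
theorem superoscillation_convergence_odd_power
    (hbar : ℝ) (hhbar : 0 < hbar) (d : ℕ) (hd : 1 ≤ d)
    (p : EuclideanSpace ℝ (Fin d)) (a : ℝ) (ha : 1 < a)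
    (q : ℕ) (hq : Odd q) (hq0 : 0 < q)
    (Z : ℕ → EuclideanSpace ℝ (Fin d) → ℂ)
    (hZ : ∀ (n : ℕ) (x : EuclideanSpace ℝ (Fin d)),
      Z n x = ∑ k ∈ Finset.range (n + 1),
        ((n.choose k : ℂ) * (((1 + a) / 2 : ℝ) : ℂ) ^ (n - k)
            * (((1 - a) / 2 : ℝ) : ℂ) ^ k)
          * Complex.exp (((⟪p, x⟫ : ℝ) : ℂ) * (-Complex.I) ^ q
              * (1 - 2 * (k : ℂ) / (n : ℂ)) ^ q / (hbar : ℂ))) :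
    (∀ x : EuclideanSpace ℝ (Fin d),
      Filter.Tendsto (fun n : ℕ => Z n x) Filter.atTop
        (nhds (Complex.exp (((⟪p, x⟫ : ℝ) : ℂ)
          * (-Complex.I * (a : ℂ)) ^ q / (hbar : ℂ)))))
    ∧ ∀ K : Set (EuclideanSpace ℝ (Fin d)), IsCompact K →
        TendstoUniformlyOn (fun n x => Z n x)
          (fun x => Complex.exp (((⟪p, x⟫ : ℝ) : ℂ)
            * (-Complex.I * (a : ℂ)) ^ q / (hbar : ℂ)))
          Filter.atTop K :=
  superoscillation_convergence_odd_power_general hbar d p a ha q Z hZ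
end

section
/- Fix t' ∈ ℝ and x' ∈ ℝ^d, and define G : {t ∈ ℝ : 0 < ω(t − t') < π} × ℝ^d → ℂ by G(t,x) = ( mω/(2πiħ·sin(ω(t − t'))) )^{d/2} · exp( (i·mω/(2ħ·sin(ω(t − t')))) · ( (‖x‖² + ‖x'‖²)·cos(ω(t − t')) − 2·(x·x') ) ), where w^{d/2} denotes the principal branch of the complex power. Then G satisfies the harmonic oscillator Schrödinger equation iħ·∂G/∂t + (ħ²/(2m))·Δ_x G − (1/2)·m·ω²·‖x‖²·G = 0 at every point (t,x) with 0 < ω(t − t') < π. -/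
/-!
Write `θ = ω (t - t')`. At fixed time the propagator is `A · exp (i (α ‖x‖² + ⟪b, x⟫ + γ))` with
`α = mω cot θ / (2ħ)` and `b = -(mω / (ħ sin θ)) x'`, and the Laplacian of such a Gaussian is the
function times `2idα - ‖2αx + b‖²`. The amplitude `A = (mω / (2πiħ sin θ))^{d/2}` has logarithmic
time derivative `-(d/2) ω cot θ`, which cancels the trace term `2idα`; the time derivative of the
phase cancels `‖2αx + b‖²` together with the potential, by `sin² θ + cos² θ = 1`.
-/

open scoped RealInnerProductSpace

/-- Directional derivative of a complex-valued function on `ℝ^d` along `v`. -/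
noncomputable def dirDeriv {d : ℕ} (v : EuclideanSpace ℝ (Fin d))
    (g : EuclideanSpace ℝ (Fin d) → ℂ) (x : EuclideanSpace ℝ (Fin d)) : ℂ :=
  deriv (fun r : ℝ => g (x + r • v)) 0

/-- The Laplacian `Δg = ∑_{j=1}^d ∂²g/∂x_j²` of a complex-valued function on `ℝ^d`. -/
noncomputable def laplacian {d : ℕ} (g : EuclideanSpace ℝ (Fin d) → ℂ) :
    EuclideanSpace ℝ (Fin d) → ℂ :=
  fun x => ∑ j : Fin d,
    dirDeriv (EuclideanSpace.single j (1 : ℝ))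
      (dirDeriv (EuclideanSpace.single j (1 : ℝ)) g) x

/-- `I(u,v) = (1/(mω))·∫_v^u f(s)·sin(ω(s−v)) ds ∈ ℝ^d`. -/
noncomputable def Ivec {d : ℕ} (m ω : ℝ) (f : ℝ → EuclideanSpace ℝ (Fin d)) (u v : ℝ) :
    EuclideanSpace ℝ (Fin d) :=
  (1 / (m * ω)) • ∫ s in v..u, Real.sin (ω * (s - v)) • f s

/-- `J(u,v) = (1/(m²ω²))·∫_v^u ∫_v^s (f(s)·f(s'))·sin(ω(u−s))·sin(ω(s'−v)) ds' ds ∈ ℝ`. -/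
noncomputable def Jval {d : ℕ} (m ω : ℝ) (f : ℝ → EuclideanSpace ℝ (Fin d)) (u v : ℝ) : ℝ :=
  (1 / (m ^ 2 * ω ^ 2)) * ∫ s in v..u, ∫ s' in v..s,
    (⟪f s, f s'⟫ : ℝ) * Real.sin (ω * (u - s)) * Real.sin (ω * (s' - v))

open Complex

section LineDerivatives

variable {E : Type*} [NormedAddCommGroup E] [InnerProductSpace ℝ E]

theorem hasDerivAt_add_smul (x v : E) : HasDerivAt (fun r : ℝ => x + r • v) v 0 := by
  simpa using ((hasDerivAt_id (0 : ℝ)).smul_const v).const_add x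

theorem hasDerivAt_quadratic_comp_line (α γ : ℝ) (b x v : E) :
    HasDerivAt (fun r : ℝ => α * ‖x + r • v‖ ^ 2 + ⟪b, x + r • v⟫ + γ)
      (2 * α * ⟪x, v⟫ + ⟪b, v⟫) 0 := by
  have hline := hasDerivAt_add_smul x v
  have h := ((hline.norm_sq.const_mul α).add ((hasDerivAt_const 0 b).inner ℝ hline)).add_const γ
  simp only [zero_smul, add_zero, inner_zero_left] at h
  exact h.congr_deriv (by ring)

theorem hasDerivAt_cexp_quadratic_comp_line (α γ : ℝ) (b x v : E) :
    HasDerivAt (fun r : ℝ => cexp (I * ((α * ‖x + r • v‖ ^ 2 + ⟪b, x + r • v⟫ + γ : ℝ) : ℂ)))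
      (cexp (I * ((α * ‖x‖ ^ 2 + ⟪b, x⟫ + γ : ℝ) : ℂ))
        * (I * ((2 * α * ⟪x, v⟫ + ⟪b, v⟫ : ℝ) : ℂ))) 0 := by
  simpa using ((hasDerivAt_quadratic_comp_line α γ b x v).ofReal_comp.const_mul I).cexp

end LineDerivatives

section TimeDerivatives

variable {θ : ℝ → ℝ} {θ' t : ℝ}

theorem HasDerivAt.cpow_div_sin (a c : ℂ) (hθ : HasDerivAt θ θ' t)
    (hslit : a / (Real.sin (θ t) : ℂ) ∈ slitPlane) :
    HasDerivAt (fun u => (a / (Real.sin (θ u) : ℂ)) ^ c)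
      ((a / (Real.sin (θ t) : ℂ)) ^ c
        * -(c * θ' * Real.cos (θ t) / Real.sin (θ t))) t := by
  have hw0 : a / (Real.sin (θ t) : ℂ) ≠ 0 := slitPlane_ne_zero hslit
  obtain ⟨ha, hsin⟩ := div_ne_zero_iff.mp hw0
  have hw := (hasDerivAt_const t a).div (hθ.sin.ofReal_comp) hsin
  have := (Complex.hasStrictDerivAt_cpow_const (c := c) hslit).hasDerivAt.comp t hw
  refine this.congr_deriv ?_
  rw [cpow_sub _ _ hw0, cpow_one, ofReal_mul]
  field_simp
  ring

theorem HasDerivAt.div_sin_mul_cos_sub (a P Q : ℝ) (hθ : HasDerivAt θ θ' t)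
    (hsin : Real.sin (θ t) ≠ 0) :
    HasDerivAt (fun u => a / Real.sin (θ u) * (P * Real.cos (θ u) - Q))
      (a * θ' * (Q * Real.cos (θ t) - P) / Real.sin (θ t) ^ 2) t := by
  have := ((hasDerivAt_const t a).div hθ.sin hsin).mul ((hθ.cos.const_mul P).sub_const Q)
  refine this.congr_deriv ?_
  simp only [Pi.div_apply]
  field_simp
  linear_combination (-(a * θ' * P)) * Real.sin_sq_add_cos_sq (θ t)

end TimeDerivatives

section EuclideanSpace

variable {d : ℕ}

theorem dirDeriv_const_mul (A : ℂ) (v : EuclideanSpace ℝ (Fin d))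
    (g : EuclideanSpace ℝ (Fin d) → ℂ) (x : EuclideanSpace ℝ (Fin d)) :
    dirDeriv v (fun y => A * g y) x = A * dirDeriv v g x :=
  deriv_const_mul_field A

theorem laplacian_const_mul (A : ℂ) (g : EuclideanSpace ℝ (Fin d) → ℂ)
    (x : EuclideanSpace ℝ (Fin d)) :
    laplacian (fun y => A * g y) x = A * laplacian g x := by
  have hfun (v : EuclideanSpace ℝ (Fin d)) :
      dirDeriv v (fun y => A * g y) = fun y => A * dirDeriv v g y :=
    funext (dirDeriv_const_mul A v g)
  simp only [laplacian, hfun, dirDeriv_const_mul, Finset.mul_sum]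

theorem dirDeriv_cexp_quadratic (α γ : ℝ) (b v x : EuclideanSpace ℝ (Fin d)) :
    dirDeriv v (fun y => cexp (I * ((α * ‖y‖ ^ 2 + ⟪b, y⟫ + γ : ℝ) : ℂ))) x
      = cexp (I * ((α * ‖x‖ ^ 2 + ⟪b, x⟫ + γ : ℝ) : ℂ))
        * (I * ((2 * α * ⟪x, v⟫ + ⟪b, v⟫ : ℝ) : ℂ)) :=
  (hasDerivAt_cexp_quadratic_comp_line α γ b x v).deriv

theorem dirDeriv_dirDeriv_cexp_quadratic (α γ : ℝ) (b v x : EuclideanSpace ℝ (Fin d)) :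
    dirDeriv v (dirDeriv v (fun y => cexp (I * ((α * ‖y‖ ^ 2 + ⟪b, y⟫ + γ : ℝ) : ℂ)))) x
      = cexp (I * ((α * ‖x‖ ^ 2 + ⟪b, x⟫ + γ : ℝ) : ℂ))
        * ((I * ((2 * α * ⟪x, v⟫ + ⟪b, v⟫ : ℝ) : ℂ)) ^ 2 + I * ((2 * α * ‖v‖ ^ 2 : ℝ) : ℂ)) := by
  have hslope : HasDerivAt (fun r : ℝ => I * ((2 * α * ⟪x + r • v, v⟫ + ⟪b, v⟫ : ℝ) : ℂ))
      (I * ((2 * α * ‖v‖ ^ 2 : ℝ) : ℂ)) 0 := by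
    have h := (((hasDerivAt_add_smul x v).inner ℝ (hasDerivAt_const 0 v)).const_mul
      (2 * α)).add_const ⟪b, v⟫
    simpa [real_inner_self_eq_norm_sq] using h.ofReal_comp.const_mul I
  show deriv (fun r : ℝ => dirDeriv v _ (x + r • v)) 0 = _
  simp only [dirDeriv_cexp_quadratic]
  refine ((hasDerivAt_cexp_quadratic_comp_line α γ b x v).mul hslope).deriv.trans ?_
  simp only [zero_smul, add_zero]
  ring

theorem laplacian_cexp_quadratic (α γ : ℝ) (b x : EuclideanSpace ℝ (Fin d)) :
    laplacian (fun y => cexp (I * ((α * ‖y‖ ^ 2 + ⟪b, y⟫ + γ : ℝ) : ℂ))) x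
      = cexp (I * ((α * ‖x‖ ^ 2 + ⟪b, x⟫ + γ : ℝ) : ℂ))
        * (I * ((2 * d * α : ℝ) : ℂ) - ((‖(2 * α) • x + b‖ ^ 2 : ℝ) : ℂ)) := by
  have hterm (j : Fin d) :
      (I * ((2 * α * ⟪x, EuclideanSpace.single j 1⟫ + ⟪b, EuclideanSpace.single j 1⟫ : ℝ)
          : ℂ)) ^ 2
          + I * ((2 * α * ‖EuclideanSpace.single j (1 : ℝ)‖ ^ 2 : ℝ) : ℂ)
        = I * ((2 * α : ℝ) : ℂ) - ((((2 * α) • x + b) j ^ 2 : ℝ) : ℂ) := by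
    simp only [EuclideanSpace.inner_single_right, PiLp.norm_single, norm_one, conj_trivial,
      PiLp.add_apply, PiLp.smul_apply, smul_eq_mul]
    push_cast
    ring_nf
    rw [I_sq]
    ring
  have hnorm : ‖(2 * α) • x + b‖ ^ 2 = ∑ j, ((2 * α) • x + b) j ^ 2 := by
    simp [EuclideanSpace.norm_sq_eq]
  simp only [laplacian, dirDeriv_dirDeriv_cexp_quadratic, hterm, ← Finset.mul_sum, hnorm,
    Finset.sum_sub_distrib, Finset.sum_const, Finset.card_univ, Fintype.card_fin, nsmul_eq_mul]
  push_cast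
  ring

noncomputable def propagator (hbar m ω t' : ℝ) (x' : EuclideanSpace ℝ (Fin d)) (t : ℝ)
    (x : EuclideanSpace ℝ (Fin d)) : ℂ :=
  ((m : ℂ) * (ω : ℂ)
      / (2 * (Real.pi : ℂ) * Complex.I * (hbar : ℂ)
        * ((Real.sin (ω * (t - t')) : ℝ) : ℂ))) ^ ((d : ℂ) / 2)
    * Complex.exp (Complex.I *
      (((m * ω / (2 * hbar * Real.sin (ω * (t - t')))) *
        ((‖x‖ ^ 2 + ‖x'‖ ^ 2) * Real.cos (ω * (t - t'))
          - 2 * (⟪x, x'⟫ : ℝ)) : ℝ) : ℂ))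

variable (hbar m ω t' : ℝ) (x' : EuclideanSpace ℝ (Fin d))

theorem laplacian_propagator (t : ℝ) (x : EuclideanSpace ℝ (Fin d)) :
    laplacian (propagator hbar m ω t' x' t) x
      = propagator hbar m ω t' x' t x
        * (I * ((d * m * ω * Real.cos (ω * (t - t')) / (hbar * Real.sin (ω * (t - t'))) : ℝ) : ℂ)
          - (((m * ω / (hbar * Real.sin (ω * (t - t')))) ^ 2
              * ‖Real.cos (ω * (t - t')) • x - x'‖ ^ 2 : ℝ) : ℂ)) := by
  set s := Real.sin (ω * (t - t'))
  set c := Real.cos (ω * (t - t'))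
  have hphase (y : EuclideanSpace ℝ (Fin d)) :
      m * ω / (2 * hbar * s) * ((‖y‖ ^ 2 + ‖x'‖ ^ 2) * c - 2 * ⟪y, x'⟫)
        = m * ω * c / (2 * hbar * s) * ‖y‖ ^ 2 + ⟪(-(m * ω / (hbar * s))) • x', y⟫
          + m * ω * c / (2 * hbar * s) * ‖x'‖ ^ 2 := by
    rw [real_inner_smul_left, real_inner_comm]
    ring
  have hgrad : (2 * (m * ω * c / (2 * hbar * s))) • x + (-(m * ω / (hbar * s))) • x'
      = (m * ω / (hbar * s)) • (c • x - x') := by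
    rw [smul_sub, smul_smul, sub_eq_add_neg, ← neg_smul]
    congr 2
    ring
  have hgauss : propagator hbar m ω t' x' t = fun y =>
      ((m : ℂ) * ω / (2 * Real.pi * I * hbar * s)) ^ ((d : ℂ) / 2)
        * cexp (I * ((m * ω * c / (2 * hbar * s) * ‖y‖ ^ 2 + ⟪(-(m * ω / (hbar * s))) • x', y⟫
          + m * ω * c / (2 * hbar * s) * ‖x'‖ ^ 2 : ℝ) : ℂ)) := by
    funext y
    rw [propagator, hphase]
  rw [hgauss, laplacian_const_mul, laplacian_cexp_quadratic, hgrad, norm_smul, mul_pow,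
    Real.norm_eq_abs, sq_abs, ← mul_assoc]
  congr 4
  ring

theorem hasDerivAt_propagator_time (hhbar : hbar ≠ 0) (hm : m ≠ 0) (hω : ω ≠ 0) {t : ℝ}
    (hs : Real.sin (ω * (t - t')) ≠ 0) (x : EuclideanSpace ℝ (Fin d)) :
    HasDerivAt (fun u => propagator hbar m ω t' x' u x)
      (propagator hbar m ω t' x' t x
        * (-((d / 2 : ℂ) * ω * Real.cos (ω * (t - t')) / Real.sin (ω * (t - t')))
          + I * ((m * ω * ω * (2 * ⟪x, x'⟫ * Real.cos (ω * (t - t')) - (‖x‖ ^ 2 + ‖x'‖ ^ 2))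
              / (2 * hbar * Real.sin (ω * (t - t')) ^ 2) : ℝ) : ℂ))) t := by
  have hθ : HasDerivAt (fun u => ω * (u - t')) ω t := by
    simpa using ((hasDerivAt_id t).sub_const t').const_mul ω
  have hslit : (m : ℂ) * ω / (2 * Real.pi * I * hbar) / (Real.sin (ω * (t - t')) : ℂ)
      ∈ slitPlane := by
    have hI : (m : ℂ) * ω / (2 * Real.pi * I * hbar) / (Real.sin (ω * (t - t')) : ℂ)
        = ((m * ω / (2 * Real.pi * hbar * Real.sin (ω * (t - t'))) : ℝ) : ℂ) / I := by
      push_cast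
      ring
    rw [hI, mem_slitPlane_iff, div_I, neg_im, mul_I_im, ofReal_re, neg_ne_zero]
    right
    exact div_ne_zero (mul_ne_zero hm hω)
      (mul_ne_zero (by simp [hhbar, Real.pi_ne_zero]) hs)
  have hamp := hθ.cpow_div_sin ((m : ℂ) * ω / (2 * Real.pi * I * hbar)) ((d : ℂ) / 2) hslit
  have hphase := hθ.div_sin_mul_cos_sub (m * ω / (2 * hbar)) (‖x‖ ^ 2 + ‖x'‖ ^ 2)
    (2 * ⟪x, x'⟫) hs
  have hfun : (fun u => propagator hbar m ω t' x' u x) = fun u =>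
      ((m : ℂ) * ω / (2 * Real.pi * I * hbar) / (Real.sin (ω * (u - t')) : ℂ)) ^ ((d : ℂ) / 2)
        * cexp (I * ((m * ω / (2 * hbar) / Real.sin (ω * (u - t'))
          * ((‖x‖ ^ 2 + ‖x'‖ ^ 2) * Real.cos (ω * (u - t')) - 2 * ⟪x, x'⟫) : ℝ) : ℂ)) := by
    funext u
    simp only [propagator, div_div]
  rw [hfun]
  refine (hamp.mul (hphase.ofReal_comp.const_mul I).cexp).congr_deriv ?_
  simp only [propagator, div_div]
  push_cast
  ring

end EuclideanSpace

theorem schrodinger_coeff_propagator_eq_zero {E : Type*} [NormedAddCommGroup E]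
    [InnerProductSpace ℝ E] (hbar m ω s c : ℝ) (n : ℕ) (hhbar : hbar ≠ 0) (hm : m ≠ 0) (hs : s ≠ 0)
    (hsc : s ^ 2 + c ^ 2 = 1) (x x' : E) :
    I * hbar * (-((n / 2 : ℂ) * ω * c / s)
        + I * ((m * ω * ω * (2 * ⟪x, x'⟫ * c - (‖x‖ ^ 2 + ‖x'‖ ^ 2)) / (2 * hbar * s ^ 2) : ℝ) : ℂ))
      + (hbar : ℂ) ^ 2 / (2 * m) * (I * ((n * m * ω * c / (hbar * s)) : ℝ)
        - (((m * ω / (hbar * s)) ^ 2 * ‖c • x - x'‖ ^ 2 : ℝ) : ℂ))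
      - 1 / 2 * m * (ω : ℂ) ^ 2 * ((‖x‖ ^ 2 : ℝ) : ℂ) = 0 := by
  rw [norm_sub_sq_real, norm_smul, real_inner_smul_left, mul_pow, Real.norm_eq_abs, sq_abs]
  have hsc' : (s : ℂ) ^ 2 + (c : ℂ) ^ 2 = 1 := by exact_mod_cast hsc
  have hħ : (hbar : ℂ) ≠ 0 := by exact_mod_cast hhbar
  have hm' : (m : ℂ) ≠ 0 := by exact_mod_cast hm
  have hs' : (s : ℂ) ≠ 0 := by exact_mod_cast hs
  push_cast
  field_simp
  linear_combination
    (ω : ℂ) ^ 2 * m * (2 * c * (⟪x, x'⟫ : ℝ) - (‖x‖ : ℂ) ^ 2 - (‖x'‖ : ℂ) ^ 2) * I_sq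
    - (ω : ℂ) ^ 2 * m * (‖x‖ : ℂ) ^ 2 * hsc'

theorem harmonic_oscillator_propagator_schrodinger_general
    (hbar m ω : ℝ) (hhbar : 0 < hbar) (hm : 0 < m) (hω : 0 < ω)
    (d : ℕ) (t' : ℝ) (x' : EuclideanSpace ℝ (Fin d))
    (G : ℝ → EuclideanSpace ℝ (Fin d) → ℂ)
    (hG : ∀ (t : ℝ) (x : EuclideanSpace ℝ (Fin d)),
      G t x = ((m : ℂ) * (ω : ℂ)
            / (2 * (Real.pi : ℂ) * Complex.I * (hbar : ℂ)
                * ((Real.sin (ω * (t - t')) : ℝ) : ℂ))) ^ ((d : ℂ) / 2)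
        * Complex.exp (Complex.I *
            (((m * ω / (2 * hbar * Real.sin (ω * (t - t')))) *
              ((‖x‖ ^ 2 + ‖x'‖ ^ 2) * Real.cos (ω * (t - t'))
                - 2 * (⟪x, x'⟫ : ℝ)) : ℝ) : ℂ))) :
    ∀ (t : ℝ) (x : EuclideanSpace ℝ (Fin d)), 0 < ω * (t - t') → ω * (t - t') < Real.pi →
      Complex.I * (hbar : ℂ) * deriv (fun s : ℝ => G s x) t
        + ((hbar : ℂ) ^ 2 / (2 * (m : ℂ))) * laplacian (G t) x
        - (1 / 2) * (m : ℂ) * (ω : ℂ) ^ 2 * ((‖x‖ ^ 2 : ℝ) : ℂ) * G t x = 0 := by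
  intro t x h₀ hπ
  obtain rfl : G = propagator hbar m ω t' x' := funext₂ hG
  have hs : Real.sin (ω * (t - t')) ≠ 0 := (Real.sin_pos_of_pos_of_lt_pi h₀ hπ).ne'
  rw [(hasDerivAt_propagator_time hbar m ω t' x' hhbar.ne' hm.ne' hω.ne' hs x).deriv,
    laplacian_propagator]
  linear_combination propagator hbar m ω t' x' t x
    * schrodinger_coeff_propagator_eq_zero hbar m ω _ _ d hhbar.ne' hm.ne' hs
      (Real.sin_sq_add_cos_sq _) x x'

/-- Fix `ħ > 0`, `m > 0`, `ω > 0`, `d ≥ 1`, `t' ∈ ℝ` and `x' ∈ ℝ^d`.  The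
harmonic oscillator propagator
`G(t,x) = (mω/(2πiħ sin(ω(t−t'))))^{d/2}·exp((imω/(2ħ sin(ω(t−t'))))·((‖x‖²+‖x'‖²)cos(ω(t−t')) − 2x·x'))`
(with the principal branch of the complex power) satisfies
`iħ·∂G/∂t + (ħ²/(2m))·Δ_x G − (1/2)mω²‖x‖²·G = 0` whenever `0 < ω(t−t') < π`. -/
theorem harmonic_oscillator_propagator_schrodinger
    (hbar m ω : ℝ) (hhbar : 0 < hbar) (hm : 0 < m) (hω : 0 < ω)
    (d : ℕ) (hd : 1 ≤ d) (t' : ℝ) (x' : EuclideanSpace ℝ (Fin d))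
    (G : ℝ → EuclideanSpace ℝ (Fin d) → ℂ)
    (hG : ∀ (t : ℝ) (x : EuclideanSpace ℝ (Fin d)),
      G t x = ((m : ℂ) * (ω : ℂ)
            / (2 * (Real.pi : ℂ) * Complex.I * (hbar : ℂ)
                * ((Real.sin (ω * (t - t')) : ℝ) : ℂ))) ^ ((d : ℂ) / 2)
        * Complex.exp (Complex.I *
            (((m * ω / (2 * hbar * Real.sin (ω * (t - t')))) *
              ((‖x‖ ^ 2 + ‖x'‖ ^ 2) * Real.cos (ω * (t - t'))
                - 2 * (⟪x, x'⟫ : ℝ)) : ℝ) : ℂ))) :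
    ∀ (t : ℝ) (x : EuclideanSpace ℝ (Fin d)), 0 < ω * (t - t') → ω * (t - t') < Real.pi →
      Complex.I * (hbar : ℂ) * deriv (fun s : ℝ => G s x) t
        + ((hbar : ℂ) ^ 2 / (2 * (m : ℂ))) * laplacian (G t) x
        - (1 / 2) * (m : ℂ) * (ω : ℂ) ^ 2 * ((‖x‖ ^ 2 : ℝ) : ℂ) * G t x = 0 :=
  harmonic_oscillator_propagator_schrodinger_general hbar m ω hhbar hm hω d t' x' G hG
end
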